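/- arXiv:2202.02888 — 5 statements merged into one kernel-verified Lean document; each statement's English description precedes it below -/
import Mathlib

section
/- Let $G$ be a finite directed weighted graph without loops with adjacency matrix $A$, edge-weight diagonal matrix $Z$, source and target matrices $L,R$, and weighted line-graph matrix $W=ZRL^TZ$. Then for every integer $k\geq 1$, the $(e,f)$ entry of $\sqrt{Z}\,(W^{\circ 1/2})^k\,\sqrt{Z}$ equals the sum over all walks of length $k+1$ in $G$ that start with edge $e$ and end with edge $f$, of the product of the weights of the edges traversed. -/
open Matrix

/-- Entrywise (nonnegative) square root of a real matrix. -/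
noncomputable def esqrt {α : Type*} (M : Matrix α α ℝ) : Matrix α α ℝ :=
  Matrix.of fun i j => Real.sqrt (M i j)

open scoped Classical in
/-- The weighted sum over all walks consisting of `ℓ + 1` consecutive edges,
starting with edge `e` and ending with edge `f`; the weight of a walk is the product
of the weights of its edges. -/
noncomputable def edgeWalkSum {n m : ℕ} (src tgt : Fin m → Fin n) (w : Fin m → ℝ)
    (ℓ : ℕ) (e f : Fin m) : ℝ :=
  ∑ es ∈ Finset.univ.filter (fun es : Fin (ℓ + 1) → Fin m =>
      es 0 = e ∧ es (Fin.last ℓ) = f ∧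
      ∀ t : Fin ℓ, tgt (es t.castSucc) = src (es t.succ)),
    ∏ t, w (es t)

open scoped Classical in
lemma edgeWalkSum_eq_sum_ite {n m : ℕ} (src tgt : Fin m → Fin n) (w : Fin m → ℝ)
    (ℓ : ℕ) (e f : Fin m) :
    edgeWalkSum src tgt w ℓ e f =
      ∑ es : Fin (ℓ + 1) → Fin m,
        if es 0 = e ∧ es (Fin.last ℓ) = f ∧
            ∀ t : Fin ℓ, tgt (es t.castSucc) = src (es t.succ) then
          ∏ t, w (es t) else 0 := by
  rw [edgeWalkSum, Finset.sum_filter]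

open scoped Classical in
lemma edgeWalkSum_zero {n m : ℕ} (src tgt : Fin m → Fin n) (w : Fin m → ℝ)
    (e f : Fin m) :
    edgeWalkSum src tgt w 0 e f = if e = f then w e else 0 := by
  rw [edgeWalkSum_eq_sum_ite]
  rw [Fintype.sum_equiv (Equiv.funUnique (Fin 1) (Fin m)) _
    (fun x => if x = e ∧ x = f then w x else 0)]
  · by_cases h : e = f
    · subst h; simp
    · rw [if_neg h]
      apply Finset.sum_eq_zero
      intro x _
      rw [if_neg]
      rintro ⟨rfl, rfl⟩
      exact h rfl
  · intro es
    simp only [Equiv.funUnique_apply, Fin.default_eq_zero, Fin.last_zero]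
    congr 1
    · simp
    · exact Fin.prod_univ_one _

open scoped Classical in
lemma edgeWalkSum_succ {n m : ℕ} (src tgt : Fin m → Fin n) (w : Fin m → ℝ)
    (ℓ : ℕ) (e f : Fin m) :
    edgeWalkSum src tgt w (ℓ + 1) e f =
      ∑ g, if tgt e = src g then w e * edgeWalkSum src tgt w ℓ g f else 0 := by
  have key : ∀ x : Fin m × (Fin (ℓ + 1) → Fin m),
      (if (Fin.cons x.1 x.2 : Fin (ℓ+2) → Fin m) 0 = e ∧ (Fin.cons x.1 x.2 : Fin (ℓ+2) → Fin m) (Fin.last (ℓ + 1)) = f ∧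
          ∀ t : Fin (ℓ + 1), tgt ((Fin.cons x.1 x.2 : Fin (ℓ+2) → Fin m) t.castSucc) =
            src ((Fin.cons x.1 x.2 : Fin (ℓ+2) → Fin m) t.succ) then
        (∏ t, w ((Fin.cons x.1 x.2 : Fin (ℓ+2) → Fin m) t) : ℝ) else 0)
      = if x.1 = e then
          (if tgt x.1 = src (x.2 0) ∧ x.2 (Fin.last ℓ) = f ∧
              ∀ t : Fin ℓ, tgt (x.2 t.castSucc) = src (x.2 t.succ) then
            w x.1 * ∏ t, w (x.2 t) else 0)
        else 0 := by
    rintro ⟨a, p⟩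
    simp only [Fin.cons_zero, ← Fin.succ_last, Fin.cons_succ, Fin.forall_fin_succ,
      Fin.castSucc_zero, ← Fin.succ_castSucc, Fin.prod_univ_succ]
    by_cases ha : a = e
    · rw [if_pos ha]
      by_cases hc : tgt a = src (p 0) ∧ p (Fin.last ℓ) = f ∧
          ∀ t : Fin ℓ, tgt (p t.castSucc) = src (p t.succ)
      · rw [if_pos hc, if_pos ⟨ha, hc.2.1, hc.1, hc.2.2⟩]
      · rw [if_neg hc, if_neg]
        rintro ⟨_, h1, h2, h3⟩
        exact hc ⟨h2, h1, h3⟩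
    · rw [if_neg ha, if_neg]
      rintro ⟨h, -⟩
      exact ha h
  rw [edgeWalkSum_eq_sum_ite]
  rw [← Equiv.sum_comp (Fin.consEquiv (fun _ : Fin (ℓ + 2) => Fin m))]
  simp only [Fin.consEquiv_apply]
  rw [Finset.sum_congr rfl (fun x _ => key x), Fintype.sum_prod_type]
  rw [Finset.sum_eq_single e]
  · -- goal: ∑ p, if e = e then ... = RHS
    simp only [if_pos rfl]
    have hg : ∀ g : Fin m,
        (if tgt e = src g then w e * edgeWalkSum src tgt w ℓ g f else 0)
        = ∑ p : Fin (ℓ + 1) → Fin m,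
            if p 0 = g ∧ tgt e = src (p 0) ∧ p (Fin.last ℓ) = f ∧
              ∀ t : Fin ℓ, tgt (p t.castSucc) = src (p t.succ) then
              w e * ∏ t, w (p t) else 0 := by
      intro g
      by_cases h1 : tgt e = src g
      · rw [if_pos h1, edgeWalkSum_eq_sum_ite, Finset.mul_sum]
        apply Finset.sum_congr rfl
        intro p _
        by_cases h2 : p 0 = g ∧ p (Fin.last ℓ) = f ∧
            ∀ t : Fin ℓ, tgt (p t.castSucc) = src (p t.succ)
        · rw [if_pos h2, if_pos ⟨h2.1, h2.1 ▸ h1, h2.2⟩]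
        · rw [if_neg h2, mul_zero, if_neg]
          rintro ⟨ha, -, hb, hc⟩
          exact h2 ⟨ha, hb, hc⟩
      · rw [if_neg h1]
        symm
        apply Finset.sum_eq_zero
        intro p _
        rw [if_neg]
        rintro ⟨hp0, hts, -⟩
        exact h1 (hp0 ▸ hts)
    rw [Finset.sum_congr rfl (fun g _ => hg g), Finset.sum_comm]
    apply Finset.sum_congr rfl
    intro p _
    rw [Finset.sum_eq_single (p 0)]
    · simp
    · intro g _ hgne
      rw [if_neg]
      rintro ⟨h, -⟩
      exact hgne h.symm
    · intro h; exact absurd (Finset.mem_univ _) h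
  · intro a _ ha
    apply Finset.sum_eq_zero
    intro p _
    rw [if_neg ha]
  · intro h; exact absurd (Finset.mem_univ _) h

/-- For every `k ≥ 1`, the `(e,f)` entry of `√Z (W^{∘1/2})^k √Z`
equals the weighted sum over all walks of length `k+1` starting with edge `e` and
ending with edge `f`. -/
theorem stmt4 {n m : ℕ} (src tgt : Fin m → Fin n) (w : Fin m → ℝ)
    (hw : ∀ e, 0 < w e)
    (hinj : Function.Injective fun e => (src e, tgt e))
    (hloop : ∀ e, src e ≠ tgt e)
    (W : Matrix (Fin m) (Fin m) ℝ)
    (hW : ∀ e f, W e f = if tgt e = src f then w e * w f else 0) :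
    ∀ k : ℕ, 1 ≤ k → ∀ e f : Fin m,
      (Matrix.diagonal (fun e => Real.sqrt (w e)) * (esqrt W) ^ k *
        Matrix.diagonal (fun e => Real.sqrt (w e))) e f = edgeWalkSum src tgt w k e f := by
  classical
  have hS : ∀ e f, esqrt W e f =
      if tgt e = src f then Real.sqrt (w e) * Real.sqrt (w f) else 0 := by
    intro e f
    rw [esqrt, Matrix.of_apply, hW]
    split_ifs with h
    · exact Real.sqrt_mul (hw e).le _
    · exact Real.sqrt_zero
  have hdiag : ∀ k : ℕ, ∀ e f : Fin m,
      (Matrix.diagonal (fun e => Real.sqrt (w e)) * (esqrt W) ^ k *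
        Matrix.diagonal (fun e => Real.sqrt (w e))) e f =
      Real.sqrt (w e) * ((esqrt W) ^ k) e f * Real.sqrt (w f) := by
    intro k e f
    rw [Matrix.mul_diagonal, Matrix.diagonal_mul]
  intro k hk
  induction k, hk using Nat.le_induction with
  | base =>
    intro e f
    rw [hdiag, pow_one, hS, edgeWalkSum_succ]
    rw [Finset.sum_eq_single f]
    · rw [edgeWalkSum_zero, if_pos rfl]
      split_ifs with h
      · calc Real.sqrt (w e) * (Real.sqrt (w e) * Real.sqrt (w f)) * Real.sqrt (w f)
            = (Real.sqrt (w e) * Real.sqrt (w e)) * (Real.sqrt (w f) * Real.sqrt (w f)) := by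
              ring
          _ = w e * w f := by
              rw [Real.mul_self_sqrt (hw e).le, Real.mul_self_sqrt (hw f).le]
      · ring
    · intro g _ hg
      rw [edgeWalkSum_zero, if_neg hg, mul_zero, ite_self]
    · intro h; exact absurd (Finset.mem_univ _) h
  | succ k hk ih =>
    intro e f
    rw [hdiag, pow_succ', Matrix.mul_apply, Finset.mul_sum, Finset.sum_mul]
    rw [edgeWalkSum_succ]
    apply Finset.sum_congr rfl
    intro g _
    rw [hS]
    have := ih g f
    rw [hdiag] at this
    split_ifs with h
    · rw [← this]
      calc Real.sqrt (w e) * (Real.sqrt (w e) * Real.sqrt (w g) * (esqrt W ^ k) g f) *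
            Real.sqrt (w f)
          = (Real.sqrt (w e) * Real.sqrt (w e)) *
            (Real.sqrt (w g) * (esqrt W ^ k) g f * Real.sqrt (w f)) := by ring
        _ = w e * (Real.sqrt (w g) * (esqrt W ^ k) g f * Real.sqrt (w f)) := by
            rw [Real.mul_self_sqrt (hw e).le]
    · simp
end

section
/- With the notation of the previous statement, for all integers $k\geq 0$ it holds that $L^T\,\sqrt{Z}\,(W^{\circ 1/2})^k\,\sqrt{Z}\,R = A^{k+1}$. -/
open Matrix

/-- The `m × n` incidence matrix associated with an endpoint map `f` on edge labels. -/
def incMat {n m : ℕ} (f : Fin m → Fin n) : Matrix (Fin m) (Fin n) ℝ :=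
  Matrix.of fun e j => if f e = j then (1 : ℝ) else 0

/-- For all `k ≥ 0`, `Lᵀ √Z (W^{∘1/2})^k √Z R = A^(k+1)`. -/
theorem stmt5 {n m : ℕ} (src tgt : Fin m → Fin n) (w : Fin m → ℝ)
    (hw : ∀ e, 0 < w e)
    (hinj : Function.Injective fun e => (src e, tgt e))
    (hloop : ∀ e, src e ≠ tgt e)
    (A : Matrix (Fin n) (Fin n) ℝ)
    (hA : ∀ e, A (src e) (tgt e) = w e)
    (hA0 : ∀ i j, (∀ e, ¬(src e = i ∧ tgt e = j)) → A i j = 0)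
    (W : Matrix (Fin m) (Fin m) ℝ)
    (hW : ∀ e f, W e f = if tgt e = src f then w e * w f else 0) :
    ∀ k : ℕ,
      (incMat src)ᵀ * Matrix.diagonal (fun e => Real.sqrt (w e)) * (esqrt W) ^ k *
        Matrix.diagonal (fun e => Real.sqrt (w e)) * incMat tgt = A ^ (k + 1) := by
  set L := incMat src with hL
  set R := incMat tgt with hR
  set S : Matrix (Fin m) (Fin m) ℝ := Matrix.diagonal (fun e => Real.sqrt (w e)) with hS
  have hSS : S * S = Matrix.diagonal w := by
    rw [hS, Matrix.diagonal_mul_diagonal]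
    have : (fun i => Real.sqrt (w i) * Real.sqrt (w i)) = w :=
      funext fun e => Real.mul_self_sqrt (hw e).le
    rw [this]
  have hAeq : Lᵀ * Matrix.diagonal w * R = A := by
    ext i j
    have : (Lᵀ * Matrix.diagonal w * R) i j
        = ∑ e, (if src e = i ∧ tgt e = j then w e else 0) := by
      rw [Matrix.mul_assoc, Matrix.mul_apply]
      simp only [Matrix.diagonal_mul, Matrix.transpose_apply, hL, hR, incMat, Matrix.of_apply]
      apply Finset.sum_congr rfl
      intro e _
      by_cases h1 : src e = i <;> by_cases h2 : tgt e = j <;> simp [h1, h2]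
    rw [this]
    by_cases h : ∃ e, src e = i ∧ tgt e = j
    · obtain ⟨e, he⟩ := h
      rw [Finset.sum_eq_single e]
      · rw [if_pos he, ← he.1, ← he.2, hA e]
      · intro f _ hfe
        by_cases h' : src f = i ∧ tgt f = j
        · exfalso; apply hfe; apply hinj
          simp [h'.1, h'.2, he.1, he.2, Prod.ext_iff]
        · simp [h']
      · intro hne; exact absurd (Finset.mem_univ e) hne
    · push_neg at h
      rw [hA0 i j (fun e he => h e he.1 he.2)]
      apply Finset.sum_eq_zero
      intro e _
      rw [if_neg]
      rintro ⟨h1, h2⟩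
      exact h e h1 h2
  have hRL : ∀ e f, (R * Lᵀ) e f = if tgt e = src f then (1:ℝ) else 0 := by
    intro e f
    have : (R * Lᵀ) e f = ∑ b, (if tgt e = b ∧ src f = b then (1:ℝ) else 0) := by
      simp only [Matrix.mul_apply, Matrix.transpose_apply, hL, hR, incMat, Matrix.of_apply]
      apply Finset.sum_congr rfl
      intro b _
      by_cases h1 : tgt e = b <;> by_cases h2 : src f = b <;> simp [h1, h2]
    rw [this]
    by_cases h : tgt e = src f
    · rw [Finset.sum_eq_single (src f)]
      · simp [h]
      · intro b _ hb; simp [Ne.symm hb]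
      · intro hne; exact absurd (Finset.mem_univ _) hne
    · rw [if_neg h]
      apply Finset.sum_eq_zero
      intro b _
      rw [if_neg]
      rintro ⟨h1, h2⟩
      exact h (h1.trans h2.symm)
  have hE : esqrt W = S * (R * Lᵀ) * S := by
    ext e f
    have hrhs : (S * (R * Lᵀ) * S) e f
        = Real.sqrt (w e) * (R * Lᵀ) e f * Real.sqrt (w f) := by
      rw [hS, Matrix.mul_diagonal, Matrix.diagonal_mul]
    rw [hrhs, hRL]
    simp only [esqrt, Matrix.of_apply, hW]
    by_cases h : tgt e = src f
    · simp [h, Real.sqrt_mul (hw e).le]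
    · simp [h]
  intro k
  rw [hE]
  induction k with
  | zero =>
    rw [pow_zero, pow_one, Matrix.mul_one, Matrix.mul_assoc Lᵀ S S, hSS, hAeq]
  | succ k ih =>
    have key : Lᵀ * S * (S * (R * Lᵀ) * S) ^ (k + 1) * S * R
        = (Lᵀ * S * (S * (R * Lᵀ) * S) ^ k * S * R) * (Lᵀ * (S * S) * R) := by
      rw [pow_succ]
      simp only [Matrix.mul_assoc]
    rw [key, ih, hSS, hAeq, ← pow_succ]
end

section
/- Let $G$ be a finite directed weighted graph without loops with adjacency matrix $A$, and let $B$ be the Hashimoto (nonbacktracking line-graph) matrix: $B_{ef}=W_{ef}$ if $W_{ef}W_{fe}=0$ and $B_{ef}=0$ otherwise, where $W$ is the weighted line-graph matrix. Let $p_k(A)$ denote the matrix whose $(i,j)$ entry is the weighted sum over all nonbacktracking walks of length $k$ from $i$ to $j$ (with $p_0(A)=I$). Then for all $k\geq 0$, $L^T\,\sqrt{Z}\,(B^{\circ 1/2})^k\,\sqrt{Z}\,R = p_{k+1}(A)$. -/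
open Matrix

open scoped Classical in
/-- `pMat A k` is the matrix whose `(i,j)` entry is the weighted sum over all
nonbacktracking walks of length `k` from node `i` to node `j` (the weight of a walk
being the product of the entries of `A` along its steps; node sequences that do not
follow edges of the graph contribute zero), with `pMat A 0 = I`. -/
noncomputable def pMat {n : ℕ} (A : Matrix (Fin n) (Fin n) ℝ) : ℕ → Matrix (Fin n) (Fin n) ℝ
  | 0 => 1
  | Nat.succ k => Matrix.of fun i j =>
      ∑ v ∈ Finset.univ.filter (fun v : Fin (k + 2) → Fin n =>
          v 0 = i ∧ v (Fin.last (k + 1)) = j ∧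
          ∀ t : Fin k, v t.castSucc.castSucc ≠ v t.succ.succ),
        ∏ t : Fin (k + 1), A (v t.castSucc) (v t.succ)

/-!
Both sides are sums over sequences of `k + 1` edges. On the left, expanding the matrix power
weights an edge sequence by `√w` at its two ends and by `√(w e) √(w f)` at each consecutive pair
`(e, f)`; that factor of `B^{∘1/2}` is nonzero exactly when `f` continues `e` without reversing
it, and the square roots telescope to `∏ w`. On the right, since there is at most one edge
between two vertices, `A a b = ∑ e, [src e = a ∧ tgt e = b] w e`; expanding the product of these
sums along a vertex walk produces the edge sequences whose endpoint sequence is that walk, and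
the endpoint sequence of an edge walk is nonbacktracking exactly when the edge walk is.
-/

open Finset

theorem Fin.mul_prod_mul_succ_mul_last {M : Type*} [CommMonoid M] {k : ℕ} (a : Fin (k + 1) → M) :
    a 0 * (∏ t : Fin k, a t.castSucc * a t.succ) * a (Fin.last k) = ∏ t, a t * a t :=
  calc _ = (a 0 * ∏ t : Fin k, a t.succ) * ((∏ t : Fin k, a t.castSucc) * a (Fin.last k)) := by
        rw [prod_mul_distrib]; ac_rfl
    _ = _ := by rw [← Fin.prod_univ_succ, ← Fin.prod_univ_castSucc, prod_mul_distrib]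

theorem Matrix.mul_pow_mul_apply {α ι κ R : Type*} [Fintype α] [DecidableEq α] [CommSemiring R]
    (X : Matrix ι α R) (M : Matrix α α R) (Y : Matrix α κ R) (k : ℕ) (i : ι) (j : κ) :
    (X * M ^ k * Y) i j = ∑ c : Fin (k + 1) → α,
      X i (c 0) * (∏ t : Fin k, M (c t.castSucc) (c t.succ)) * Y (c (Fin.last k)) j := by
  induction k generalizing X with
  | zero =>
    rw [pow_zero, Matrix.mul_one, mul_apply, ← (Equiv.funUnique (Fin 1) α).symm.sum_comp]
    simp
  | succ k ih =>
    rw [pow_succ', ← Matrix.mul_assoc, ih]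
    conv_rhs => rw [← (Fin.consEquiv fun _ => α).sum_comp, Fintype.sum_prod_type, sum_comm]
    simp [Fin.consEquiv, mul_apply, sum_mul, Fin.prod_univ_succ, mul_assoc]

section EdgeWalks

variable {V E : Type*} (src tgt : E → V)

def IsNonbacktrackingEdgeWalk {k : ℕ} (c : Fin (k + 1) → E) : Prop :=
  ∀ t : Fin k, tgt (c t.castSucc) = src (c t.succ) ∧ tgt (c t.succ) ≠ src (c t.castSucc)

instance [DecidableEq V] {k : ℕ} (c : Fin (k + 1) → E) :
    Decidable (IsNonbacktrackingEdgeWalk src tgt c) := by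
  unfold IsNonbacktrackingEdgeWalk; infer_instance

variable {src tgt}

theorem forall_src_tgt_eq_iff_eq_cons {k : ℕ} {c : Fin (k + 1) → E} {v : Fin (k + 2) → V} :
    (∀ t, src (c t) = v t.castSucc ∧ tgt (c t) = v t.succ) ↔
      v = Fin.cons (src (c 0)) (tgt ∘ c) ∧ ∀ t : Fin k, tgt (c t.castSucc) = src (c t.succ) := by
  constructor
  · intro h
    refine ⟨funext fun t => ?_, fun t => ?_⟩
    · cases t using Fin.cases with
      | zero => simpa using (h 0).1.symm
      | succ s => simpa using (h s).2.symm
    · rw [(h _).2, (h _).1, Fin.succ_castSucc]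
  · rintro ⟨rfl, hpath⟩ t
    refine ⟨?_, rfl⟩
    cases t using Fin.cases with
    | zero => simp
    | succ s => simp [hpath s]

theorem isNonbacktrackingVertexWalk_and_forall_src_tgt_eq_iff {k : ℕ} {c : Fin (k + 1) → E}
    {v : Fin (k + 2) → V} {i j : V} :
    ((v 0 = i ∧ v (Fin.last (k + 1)) = j ∧ ∀ t : Fin k, v t.castSucc.castSucc ≠ v t.succ.succ) ∧
        ∀ t, src (c t) = v t.castSucc ∧ tgt (c t) = v t.succ) ↔
      v = Fin.cons (src (c 0)) (tgt ∘ c) ∧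
        (src (c 0) = i ∧ tgt (c (Fin.last k)) = j ∧ IsNonbacktrackingEdgeWalk src tgt c) := by
  constructor
  · rintro ⟨⟨h0, hlast, hnb⟩, hv⟩
    obtain ⟨rfl, hpath⟩ := forall_src_tgt_eq_iff_eq_cons.mp hv
    refine ⟨rfl, by simpa using h0, by simpa [← Fin.succ_last] using hlast,
      fun t => ⟨hpath t, fun h => hnb t ?_⟩⟩
    rw [← (hv t.castSucc).1, ← (hv t.succ).2, h]
  · rintro ⟨rfl, h0, hlast, hnb⟩
    have hv := forall_src_tgt_eq_iff_eq_cons.mpr ⟨rfl, fun t => (hnb t).1⟩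
    refine ⟨⟨by simpa using h0, by simpa [← Fin.succ_last] using hlast,
      fun t h => (hnb t).2 ?_⟩, hv⟩
    rw [← (hv t.castSucc).1, ← (hv t.succ).2] at h
    exact h.symm

theorem Matrix.apply_eq_sum_edges [Fintype E] [DecidableEq V] {A : Matrix V V ℝ} {w : E → ℝ}
    (hinj : Function.Injective fun e => (src e, tgt e))
    (hA : ∀ e, A (src e) (tgt e) = w e)
    (hA0 : ∀ i j, (∀ e, ¬(src e = i ∧ tgt e = j)) → A i j = 0) (a b : V) :
    A a b = ∑ e, if src e = a ∧ tgt e = b then w e else 0 := by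
  by_cases h : ∃ e, src e = a ∧ tgt e = b
  · obtain ⟨e, he⟩ := h
    rw [sum_eq_single e (fun f _ hf => if_neg fun h => hf (hinj (Prod.ext (h.1.trans he.1.symm)
      (h.2.trans he.2.symm)))) (by simp), if_pos he, ← hA, he.1, he.2]
  · push Not at h
    rw [hA0 a b fun e he => h e he.1 he.2]
    exact (sum_eq_zero fun e _ => if_neg fun he => h e he.1 he.2).symm

theorem esqrt_apply_of_hashimoto [DecidableEq V] {w : E → ℝ} (hw : ∀ e, 0 < w e)
    {W B : Matrix E E ℝ} (hW : ∀ e f, W e f = if tgt e = src f then w e * w f else 0)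
    (hB : ∀ e f, B e f = if W e f * W f e = 0 then W e f else 0) (e f : E) :
    esqrt B e f = if tgt e = src f ∧ tgt f ≠ src e then √(w e) * √(w f) else 0 := by
  by_cases h₁ : tgt e = src f <;> by_cases h₂ : tgt f = src e <;>
    simp [esqrt, hB, hW, h₁, h₂, (hw e).ne', (hw f).ne', (hw e).le, Real.sqrt_mul]

end EdgeWalks

theorem incMat_transpose_mul_pow_mul_incMat_apply {n m : ℕ} {src tgt : Fin m → Fin n}
    {w : Fin m → ℝ} (hw : ∀ e, 0 ≤ w e) {M : Matrix (Fin m) (Fin m) ℝ}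
    (hM : ∀ e f, M e f = if tgt e = src f ∧ tgt f ≠ src e then √(w e) * √(w f) else 0)
    (k : ℕ) (i j : Fin n) :
    ((incMat src)ᵀ * diagonal (fun e => √(w e)) * M ^ k * diagonal (fun e => √(w e)) *
        incMat tgt) i j =
      ∑ c : Fin (k + 1) → Fin m,
        if src (c 0) = i ∧ tgt (c (Fin.last k)) = j ∧ IsNonbacktrackingEdgeWalk src tgt c then
          ∏ t, w (c t) else 0 := by
  simp only [Matrix.mul_assoc]
  rw [← Matrix.mul_assoc, ← Matrix.mul_assoc, mul_pow_mul_apply]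
  refine sum_congr rfl fun c _ => ?_
  have htel := Fin.mul_prod_mul_succ_mul_last fun t => √(w (c t))
  simp only [Real.mul_self_sqrt (hw _)] at htel
  simp only [mul_diagonal, diagonal_mul, transpose_apply, incMat, of_apply, hM,
    Fintype.prod_ite_zero]
  split_ifs <;> simp_all [IsNonbacktrackingEdgeWalk]

theorem pMat_succ_apply {E : Type*} [Fintype E] {n : ℕ} {src tgt : E → Fin n}
    {A : Matrix (Fin n) (Fin n) ℝ} {w : E → ℝ}
    (hinj : Function.Injective fun e => (src e, tgt e))
    (hA : ∀ e, A (src e) (tgt e) = w e)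
    (hA0 : ∀ i j, (∀ e, ¬(src e = i ∧ tgt e = j)) → A i j = 0) (k : ℕ) (i j : Fin n) :
    pMat A (k + 1) i j = ∑ c : Fin (k + 1) → E,
      if src (c 0) = i ∧ tgt (c (Fin.last k)) = j ∧ IsNonbacktrackingEdgeWalk src tgt c then
        ∏ t, w (c t) else 0 := by
  calc pMat A (k + 1) i j
      = ∑ v : Fin (k + 2) → Fin n,
          if v 0 = i ∧ v (Fin.last (k + 1)) = j ∧ ∀ t : Fin k, v t.castSucc.castSucc ≠ v t.succ.succ
          then ∏ t : Fin (k + 1), ∑ e, (if src e = v t.castSucc ∧ tgt e = v t.succ then w e else 0)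
          else 0 := by
        simp only [pMat, of_apply, sum_filter, ← A.apply_eq_sum_edges hinj hA hA0]
    _ = ∑ v : Fin (k + 2) → Fin n,
          if v 0 = i ∧ v (Fin.last (k + 1)) = j ∧ ∀ t : Fin k, v t.castSucc.castSucc ≠ v t.succ.succ
          then ∑ c : Fin (k + 1) → E,
            if ∀ t, src (c t) = v t.castSucc ∧ tgt (c t) = v t.succ then ∏ t, w (c t) else 0
          else 0 := by
        simp only [Fintype.prod_sum, Fintype.prod_ite_zero]
        congr! -- the two sides differ only in their `Decidable` instances
    _ = _ := by
        simp only [ite_sum_zero, ← ite_and]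
        rw [sum_comm]
        simp only [isNonbacktrackingVertexWalk_and_forall_src_tgt_eq_iff, ite_and,
          Fintype.sum_ite_eq']

theorem stmt6_general {n m : ℕ} (src tgt : Fin m → Fin n) (w : Fin m → ℝ)
    (hw : ∀ e, 0 < w e)
    (hinj : Function.Injective fun e => (src e, tgt e))
    (A : Matrix (Fin n) (Fin n) ℝ)
    (hA : ∀ e, A (src e) (tgt e) = w e)
    (hA0 : ∀ i j, (∀ e, ¬(src e = i ∧ tgt e = j)) → A i j = 0)
    (W : Matrix (Fin m) (Fin m) ℝ)
    (hW : ∀ e f, W e f = if tgt e = src f then w e * w f else 0)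
    (B : Matrix (Fin m) (Fin m) ℝ)
    (hB : ∀ e f, B e f = if W e f * W f e = 0 then W e f else 0) :
    ∀ k : ℕ,
      (incMat src)ᵀ * Matrix.diagonal (fun e => Real.sqrt (w e)) * (esqrt B) ^ k *
        Matrix.diagonal (fun e => Real.sqrt (w e)) * incMat tgt = pMat A (k + 1) := by
  intro k
  ext i j
  rw [incMat_transpose_mul_pow_mul_incMat_apply (fun e => (hw e).le)
      (esqrt_apply_of_hashimoto hw hW hB), pMat_succ_apply hinj hA hA0]

/-- With `B` the Hashimoto (nonbacktracking line-graph) matrix, for all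
`k ≥ 0` one has `Lᵀ √Z (B^{∘1/2})^k √Z R = p_{k+1}(A)`. -/
theorem stmt6 {n m : ℕ} (src tgt : Fin m → Fin n) (w : Fin m → ℝ)
    (hw : ∀ e, 0 < w e)
    (hinj : Function.Injective fun e => (src e, tgt e))
    (hloop : ∀ e, src e ≠ tgt e)
    (A : Matrix (Fin n) (Fin n) ℝ)
    (hA : ∀ e, A (src e) (tgt e) = w e)
    (hA0 : ∀ i j, (∀ e, ¬(src e = i ∧ tgt e = j)) → A i j = 0)
    (W : Matrix (Fin m) (Fin m) ℝ)
    (hW : ∀ e f, W e f = if tgt e = src f then w e * w f else 0)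
    (B : Matrix (Fin m) (Fin m) ℝ)
    (hB : ∀ e f, B e f = if W e f * W f e = 0 then W e f else 0) :
    ∀ k : ℕ,
      (incMat src)ᵀ * Matrix.diagonal (fun e => Real.sqrt (w e)) * (esqrt B) ^ k *
        Matrix.diagonal (fun e => Real.sqrt (w e)) * incMat tgt = pMat A (k + 1) :=
  stmt6_general src tgt w hw hinj A hA hA0 W hW B hB
end

section
/- Let $G$ be a finite directed weighted graph without loops with adjacency matrix $A\in\mathbb{R}^{n\times n}_{\geq 0}$, and let $p_k(A)$ be the matrix of weighted sums of nonbacktracking walks of length $k$ (with $p_0(A)=I$, $p_1(A)=A$). Then for all $k\geq 1$, $p_k(A) = \sum_{\substack{\ell=2h+1\ \mathrm{odd}\\ 1\leq \ell\leq k}} \big(A^{\circ(h+1)}\circ (A^T)^{\circ h}\big)\, p_{k-\ell}(A) \; - \; \sum_{\substack{\ell=2h\ \mathrm{even}\\ 2\leq \ell\leq k}} \dd\big((A^{\circ h})^2\big)\, p_{k-\ell}(A)$. -/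
open Matrix

/-!
Let `C_k(a, b, j)` be the weighted sum of the nonbacktracking walks of length `k` from `b` to `j`
whose first step does not go back to `a`. Splitting off the first step of a walk gives
`p_{k+1}(i, j) = ∑_m A_im C_k(i, m, j)` and `C_{k+1}(a, b, j) = p_{k+1}(b, j) - A_ba C_k(b, a, j)`.
Substituting the second identity into the first again and again traces the walk `i m i m …`
back and forth: the `ℓ`-th substitution produces the `ℓ`-th term of the recurrence, with sign
`(-1)^(ℓ+1)`, and the process ends at `C_0(a, b, j) = δ_{bj}`.
-/

open Finset

theorem unroll_coupled_recurrence {M : Type*} [AddCommGroup M] (f g y z : ℕ → ℕ → M)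
    (hy0 : ∀ h, y h 0 = f h 0) (hz0 : ∀ h, z h 0 = g h 0)
    (hy : ∀ h k, y h (k + 1) = f h (k + 1) - z h k)
    (hz : ∀ h k, z h (k + 1) = g h (k + 1) - y (h + 1) k) (k h : ℕ) :
    y h k = (∑ l ∈ range (k / 2 + 1), f (h + l) (k - 2 * l))
        - ∑ l ∈ range ((k + 1) / 2), g (h + l) (k - (2 * l + 1)) ∧
      z h k = (∑ l ∈ range (k / 2 + 1), g (h + l) (k - 2 * l))
        - ∑ l ∈ range ((k + 1) / 2), f (h + 1 + l) (k - (2 * l + 1)) := by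
  induction k generalizing h with
  | zero => simp [hy0, hz0]
  | succ k ih =>
    rw [hy, hz, (ih h).2, (ih (h + 1)).1, show (k + 1 + 1) / 2 = k / 2 + 1 by omega,
      sum_range_succ' _ ((k + 1) / 2), sum_range_succ' _ ((k + 1) / 2)]
    have shift (F : ℕ → ℕ → M) :
        ∑ l ∈ range ((k + 1) / 2), F (h + (l + 1)) (k + 1 - 2 * (l + 1)) =
          ∑ l ∈ range ((k + 1) / 2), F (h + 1 + l) (k - (2 * l + 1)) :=
      sum_congr rfl fun l _ => by congr! 1 <;> omega
    have drop (F : ℕ → ℕ → M) (h' : ℕ) :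
        ∑ l ∈ range (k / 2 + 1), F (h' + l) (k + 1 - (2 * l + 1)) =
          ∑ l ∈ range (k / 2 + 1), F (h' + l) (k - 2 * l) :=
      sum_congr rfl fun l _ => by congr 1; omega
    simp only [shift, drop, add_zero, mul_zero, Nat.sub_zero]
    constructor <;> abel

section Walks

variable {V R : Type*}

def walkWeight [CommMonoid R] (A : Matrix V V R) {k : ℕ} (w : Fin (k + 1) → V) : R :=
  ∏ t : Fin k, A (w t.castSucc) (w t.succ)

def IsNonbacktracking {k : ℕ} (w : Fin (k + 2) → V) : Prop :=
  ∀ t : Fin k, w t.castSucc.castSucc ≠ w t.succ.succ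

instance [DecidableEq V] {k : ℕ} (w : Fin (k + 2) → V) : Decidable (IsNonbacktracking w) :=
  inferInstanceAs (Decidable (∀ _ : Fin k, _))

theorem walkWeight_cons [CommMonoid R] (A : Matrix V V R) {k : ℕ} (a : V)
    (w : Fin (k + 1) → V) :
    walkWeight A (Fin.cons a w : Fin (k + 2) → V) = A a (w 0) * walkWeight A w := by
  simp only [walkWeight, Fin.prod_univ_succ, Fin.castSucc_zero, Fin.cons_zero,
    ← Fin.succ_castSucc, Fin.cons_succ]

theorem isNonbacktracking_cons {k : ℕ} (a : V) (w : Fin (k + 2) → V) :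
    IsNonbacktracking (Fin.cons a w : Fin (k + 3) → V) ↔ a ≠ w 1 ∧ IsNonbacktracking w := by
  simp only [IsNonbacktracking, Fin.forall_fin_succ, Fin.castSucc_zero, Fin.cons_zero,
    Fin.succ_zero_eq_one, ← Fin.succ_castSucc, Fin.cons_succ]

theorem Fin.sum_pi_eq_sum_sum_cons [Fintype V] {M : Type*} [AddCommMonoid M] {k : ℕ}
    (F : (Fin (k + 1) → V) → M) :
    ∑ w, F w = ∑ a, ∑ w : Fin k → V, F (Fin.cons a w) := by
  rw [← (Fin.consEquiv fun _ => V).sum_comp, Fintype.sum_prod_type]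
  rfl

variable [Fintype V] [DecidableEq V] [CommSemiring R]

/-- The `C_k(a, b, j)` of the sketch above. -/
def continuationSum (A : Matrix V V R) (k : ℕ) (a b j : V) : R :=
  ∑ w : Fin (k + 1) → V,
    if w 0 = b ∧ w (Fin.last k) = j ∧ IsNonbacktracking (Fin.cons a w : Fin (k + 2) → V)
    then walkWeight A w else 0

theorem sum_nonbacktracking_eq_sum_continuationSum (A : Matrix V V R) (k : ℕ) (b j : V)
    (φ : V → R) :
    ∑ w : Fin (k + 2) → V,
      (if w 0 = b ∧ w (Fin.last (k + 1)) = j ∧ IsNonbacktracking w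
        then φ (w 1) * walkWeight A w else 0) =
      ∑ m, φ m * A b m * continuationSum A k b m j := by
  simp only [continuationSum, mul_sum, mul_ite, mul_zero, ite_and]
  rw [Fin.sum_pi_eq_sum_sum_cons, sum_comm (γ := V)]
  conv_rhs => rw [sum_comm]
  simp only [Fin.cons_zero, Fin.cons_one, Fin.cons_last, walkWeight_cons, sum_ite_eq',
    sum_ite_eq, mem_univ, if_true, mul_assoc]

theorem continuationSum_zero (A : Matrix V V R) (a b j : V) :
    continuationSum A 0 a b j = (1 : Matrix V V R) b j := by
  rw [continuationSum, Fin.sum_pi_eq_sum_sum_cons]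
  simp [walkWeight, IsNonbacktracking, Matrix.one_apply, ite_and]

end Walks

section NonbacktrackingRecurrence

variable {n : ℕ} (A : Matrix (Fin n) (Fin n) ℝ)

theorem pMat_succ_apply_s7 (k : ℕ) (i j : Fin n) :
    pMat A (k + 1) i j = ∑ w : Fin (k + 2) → Fin n,
      if w 0 = i ∧ w (Fin.last (k + 1)) = j ∧ IsNonbacktracking w then walkWeight A w else 0 := by
  rw [pMat, Matrix.of_apply, sum_filter]
  exact sum_congr rfl fun w _ => if_congr Iff.rfl rfl rfl

theorem pMat_succ_apply_eq_sum (k : ℕ) (i j : Fin n) :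
    pMat A (k + 1) i j = ∑ m, A i m * continuationSum A k i m j := by
  rw [pMat_succ_apply_s7]
  simpa using sum_nonbacktracking_eq_sum_continuationSum A k i j 1

theorem continuationSum_succ (k : ℕ) (a b j : Fin n) :
    continuationSum A (k + 1) a b j =
      pMat A (k + 1) b j - A b a * continuationSum A k b a j := by
  calc continuationSum A (k + 1) a b j
      = ∑ w : Fin (k + 2) → Fin n,
          if w 0 = b ∧ w (Fin.last (k + 1)) = j ∧ IsNonbacktracking w
          then (1 - if w 1 = a then 1 else 0) * walkWeight A w else 0 := by
        refine sum_congr rfl fun w _ => ?_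
        simp only [isNonbacktracking_cons]
        by_cases h : w 1 = a
        · simp [h]
        · simp [h, Ne.symm h]
    _ = ∑ m, (1 - if m = a then 1 else 0) * A b m * continuationSum A k b m j :=
        sum_nonbacktracking_eq_sum_continuationSum A k b j fun m => 1 - if m = a then 1 else 0
    _ = pMat A (k + 1) b j - A b a * continuationSum A k b a j := by
        simp [sub_mul, sum_sub_distrib, pMat_succ_apply_eq_sum]

/- `oddZigzag A h = A^{∘(h+1)} ∘ (Aᵀ)^{∘h}` and `evenZigzag A h = dd((A^{∘h})²)` weigh the walks
`i m i m …` of `2h + 1`, resp. `2h`, steps; the tails collect such a walk (of `2h + 1`, resp.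
`2h + 2`, steps) followed by a nonbacktracking continuation of length `k`. -/

def oddZigzag (h : ℕ) : Matrix (Fin n) (Fin n) ℝ :=
  of fun i j => A i j ^ (h + 1) * A j i ^ h

def evenZigzag (h : ℕ) : Matrix (Fin n) (Fin n) ℝ :=
  diagonal fun i => ((of fun a b => A a b ^ h) * (of fun a b => A a b ^ h)) i i

def oddZigzagTail (h k : ℕ) : Matrix (Fin n) (Fin n) ℝ :=
  of fun i j => ∑ m, A i m ^ (h + 1) * A m i ^ h * continuationSum A k i m j

def evenZigzagTail (h k : ℕ) : Matrix (Fin n) (Fin n) ℝ :=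
  of fun i j => ∑ m, A i m ^ (h + 1) * A m i ^ (h + 1) * continuationSum A k m i j

theorem evenZigzag_mul_apply (h : ℕ) (P : Matrix (Fin n) (Fin n) ℝ) (i j : Fin n) :
    (evenZigzag A h * P) i j = ∑ m, A i m ^ h * A m i ^ h * P i j := by
  rw [evenZigzag, diagonal_mul, mul_apply, sum_mul]
  rfl

theorem pMat_succ_eq_oddZigzagTail_zero (k : ℕ) : pMat A (k + 1) = oddZigzagTail A 0 k := by
  ext i j
  simp [oddZigzagTail, pMat_succ_apply_eq_sum]

theorem oddZigzagTail_zero (h : ℕ) : oddZigzagTail A h 0 = oddZigzag A h * pMat A 0 := by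
  ext i j
  simp [oddZigzagTail, oddZigzag, mul_apply, continuationSum_zero, pMat]

theorem evenZigzagTail_zero (h : ℕ) :
    evenZigzagTail A h 0 = evenZigzag A (h + 1) * pMat A 0 := by
  ext i j
  simp [evenZigzagTail, evenZigzag_mul_apply, continuationSum_zero, pMat]

theorem oddZigzagTail_succ (h k : ℕ) :
    oddZigzagTail A h (k + 1) = oddZigzag A h * pMat A (k + 1) - evenZigzagTail A h k := by
  ext i j
  simp only [oddZigzagTail, evenZigzagTail, oddZigzag, of_apply, Matrix.sub_apply, mul_apply,
    continuationSum_succ, mul_sub, sum_sub_distrib]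
  congr 1
  exact sum_congr rfl fun m _ => by ring

theorem evenZigzagTail_succ (h k : ℕ) :
    evenZigzagTail A h (k + 1) =
      evenZigzag A (h + 1) * pMat A (k + 1) - oddZigzagTail A (h + 1) k := by
  ext i j
  rw [Matrix.sub_apply, evenZigzag_mul_apply]
  simp only [oddZigzagTail, evenZigzagTail, of_apply, continuationSum_succ, mul_sub,
    sum_sub_distrib]
  congr 1
  exact sum_congr rfl fun m _ => by ring

end NonbacktrackingRecurrence

section Reindexing

variable {M : Type*} [AddCommMonoid M]

theorem sum_filter_two_mul_add_one_le (K : ℕ) (F : ℕ → M) :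
    ∑ h ∈ (range (K + 1)).filter (fun h => 2 * h + 1 ≤ K), F h =
      ∑ h ∈ range ((K + 1) / 2), F h := by
  congr 1
  ext h
  simp only [mem_filter, mem_range]
  omega

theorem sum_filter_pos_two_mul_le (K : ℕ) (F : ℕ → M) :
    ∑ h ∈ (range (K + 1)).filter (fun h => 1 ≤ h ∧ 2 * h ≤ K), F h =
      ∑ h ∈ range (K / 2), F (h + 1) := by
  have hIco : (range (K + 1)).filter (fun h => 1 ≤ h ∧ 2 * h ≤ K) = Ico 1 (K / 2 + 1) := by
    ext h
    simp only [mem_filter, mem_range, mem_Ico]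
    omega
  rw [hIco, sum_Ico_eq_sum_range, Nat.add_sub_cancel]
  simp only [add_comm 1]

end Reindexing

theorem stmt7_general {n : ℕ} (A : Matrix (Fin n) (Fin n) ℝ) :
    ∀ k : ℕ, 1 ≤ k →
      pMat A k =
        (∑ h ∈ (Finset.range (k + 1)).filter (fun h => 2 * h + 1 ≤ k),
          (Matrix.of fun i j => A i j ^ (h + 1) * A j i ^ h) * pMat A (k - (2 * h + 1))) -
        (∑ h ∈ (Finset.range (k + 1)).filter (fun h => 1 ≤ h ∧ 2 * h ≤ k),
          Matrix.diagonal (fun i =>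
            ((Matrix.of fun a b => A a b ^ h) * (Matrix.of fun a b => A a b ^ h)) i i) *
            pMat A (k - 2 * h)) := by
  intro K hK
  obtain ⟨k, rfl⟩ : ∃ k, K = k + 1 := ⟨K - 1, by omega⟩
  obtain ⟨hclosed, -⟩ := unroll_coupled_recurrence
    (fun h k => oddZigzag A h * pMat A k) (fun h k => evenZigzag A (h + 1) * pMat A k)
    (oddZigzagTail A) (evenZigzagTail A) (oddZigzagTail_zero A) (evenZigzagTail_zero A)
    (oddZigzagTail_succ A) (evenZigzagTail_succ A) k 0
  rw [sum_filter_two_mul_add_one_le, sum_filter_pos_two_mul_le, pMat_succ_eq_oddZigzagTail_zero,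
    hclosed, show (k + 1 + 1) / 2 = k / 2 + 1 by omega]
  simp only [zero_add]
  congr 1 <;> refine sum_congr rfl fun l _ => ?_ <;> congr 2 <;> omega

/-- the nonbacktracking walk matrices of a weighted loopless graph satisfy,
for all `k ≥ 1`, the growing recurrence
`p_k(A) = ∑_{ℓ=2h+1 odd, 1≤ℓ≤k} (A^{∘(h+1)} ∘ (Aᵀ)^{∘h}) p_{k-ℓ}(A)
        - ∑_{ℓ=2h even, 2≤ℓ≤k} dd((A^{∘h})²) p_{k-ℓ}(A)`. -/
theorem stmt7 {n : ℕ} (A : Matrix (Fin n) (Fin n) ℝ)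
    (hA : ∀ i j, 0 ≤ A i j) (hdiag : ∀ i, A i i = 0) :
    ∀ k : ℕ, 1 ≤ k →
      pMat A k =
        (∑ h ∈ (Finset.range (k + 1)).filter (fun h => 2 * h + 1 ≤ k),
          (Matrix.of fun i j => A i j ^ (h + 1) * A j i ^ h) * pMat A (k - (2 * h + 1))) -
        (∑ h ∈ (Finset.range (k + 1)).filter (fun h => 1 ≤ h ∧ 2 * h ≤ k),
          Matrix.diagonal (fun i =>
            ((Matrix.of fun a b => A a b ^ h) * (Matrix.of fun a b => A a b ^ h)) i i) *
            pMat A (k - 2 * h)) :=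
  stmt7_general A
end

section
/- Let $\mathcal{G}$ be a finite time-evolving weighted graph with global source, target and weight matrices $\mathcal{L},\mathcal{R},Z$. Let $\widehat{M}=\sqrt{Z}\,\big(\mathcal{R}\mathcal{L}^T - \mathcal{R}\mathcal{L}^T\circ\mathcal{L}\mathcal{R}^T\big)\,\sqrt{Z}$, and let $M$ be obtained from $\widehat{M}$ by setting all entries below the block diagonal to zero. Then $M$ equals the global temporal transition matrix in the regime where backtracking is entirely forbidden, i.e., each block $M_{ij}$ ($i\leq j$) equals $(B^{[i,j]})^{\circ 1/2}$ (and $M_{ii}=(B^{[i]})^{\circ 1/2}$). -/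
open Matrix

open scoped Classical in
/-- for a finite time-evolving weighted graph whose (global) edges are
indexed by the sigma type `E = Σ i : Fin N, Fin (mE i)` (edge `⟨i, _⟩` lives in time
stamp `i`), with global source/target incidence matrices `ℒ, ℛ`, global diagonal weight
matrix `Z`, global weighted line-graph matrix `W = Z ℛ ℒᵀ Z` and fully nonbacktracking
blocks `B e f = W e f - √(W e f · W f e)`, the matrix obtained from
`M̂ = √Z (ℛℒᵀ - ℛℒᵀ ∘ ℒℛᵀ) √Z` by zeroing all entries below the block diagonal equals
the global temporal transition matrix in the regime where backtracking is entirely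
forbidden, i.e. its `(e,f)` entry is `√(B e f)` when `e` is in a time stamp `≤` that of
`f`, and `0` otherwise. -/
theorem stmt19 {n N : ℕ} (mE : Fin N → ℕ)
    (src tgt : ((i : Fin N) × Fin (mE i)) → Fin n)
    (w : ((i : Fin N) × Fin (mE i)) → ℝ) (hw : ∀ e, 0 < w e)
    (ℒ ℛ : Matrix ((i : Fin N) × Fin (mE i)) (Fin n) ℝ)
    (hL : ∀ e v, ℒ e v = if src e = v then 1 else 0)
    (hR : ∀ e v, ℛ e v = if tgt e = v then 1 else 0)
    (Z : Matrix ((i : Fin N) × Fin (mE i)) ((i : Fin N) × Fin (mE i)) ℝ)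
    (hZ : Z = Matrix.diagonal w)
    (W : Matrix ((i : Fin N) × Fin (mE i)) ((i : Fin N) × Fin (mE i)) ℝ)
    (hWdef : W = Z * (ℛ * ℒᵀ) * Z)
    (B : Matrix ((i : Fin N) × Fin (mE i)) ((i : Fin N) × Fin (mE i)) ℝ)
    (hB : ∀ e f, B e f = W e f - Real.sqrt (W e f * W f e))
    (Mhat M : Matrix ((i : Fin N) × Fin (mE i)) ((i : Fin N) × Fin (mE i)) ℝ)
    (hMhat : Mhat =
      Matrix.diagonal (fun e => Real.sqrt (w e)) *
        (ℛ * ℒᵀ - (ℛ * ℒᵀ) ⊙ (ℒ * ℛᵀ)) *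
        Matrix.diagonal (fun e => Real.sqrt (w e)))
    (hM : ∀ e f : (i : Fin N) × Fin (mE i),
      M e f = if e.1 ≤ f.1 then Mhat e f else 0) :
    ∀ e f : (i : Fin N) × Fin (mE i),
      M e f = if e.1 ≤ f.1 then Real.sqrt (B e f) else 0 := by
  intro e f
  rw [hM]
  split
  · have hRL : ∀ a b, (ℛ * ℒᵀ) a b = if tgt a = src b then 1 else 0 := by
      intro a b
      simp only [Matrix.mul_apply, Matrix.transpose_apply, hL, hR]
      rw [Finset.sum_eq_single (tgt a)]
      · simp [eq_comm]
      · intro v _ hv; simp [Ne.symm hv]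
      · simp
    have hLR : ∀ a b, (ℒ * ℛᵀ) a b = if src a = tgt b then 1 else 0 := by
      intro a b
      simp only [Matrix.mul_apply, Matrix.transpose_apply, hL, hR]
      rw [Finset.sum_eq_single (src a)]
      · simp [eq_comm]
      · intro v _ hv; simp [Ne.symm hv]
      · simp
    have hWe : ∀ a b, W a b = (if tgt a = src b then 1 else 0) * (w a * w b) := by
      intro a b
      rw [hWdef, hZ, Matrix.mul_diagonal, Matrix.diagonal_mul, hRL]
      ring
    have hMe : Mhat e f =
        ((if tgt e = src f then 1 else 0) -
          (if tgt e = src f then 1 else 0) * (if src e = tgt f then 1 else 0)) *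
        (Real.sqrt (w e) * Real.sqrt (w f)) := by
      rw [hMhat, Matrix.mul_diagonal, Matrix.diagonal_mul, Matrix.sub_apply,
        Matrix.hadamard_apply, hRL, hLR]
      ring
    rw [hMe, hB, hWe e f, hWe f e]
    have hwe := (hw e).le
    have hwf := (hw f).le
    have hsq : Real.sqrt (w e * w f) = Real.sqrt (w e) * Real.sqrt (w f) :=
      Real.sqrt_mul hwe _
    by_cases h1 : tgt e = src f <;> by_cases h2 : src e = tgt f
    · have h2' : tgt f = src e := h2.symm
      simp only [if_pos h1, if_pos h2, if_pos h2', one_mul, mul_one]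
      have : w e * w f * (w f * w e) = (w e * w f) ^ 2 := by ring
      rw [this, Real.sqrt_sq (by positivity), sub_self, sub_self, zero_mul,
        Real.sqrt_zero]
    · have h2' : ¬ tgt f = src e := fun h => h2 h.symm
      simp only [if_pos h1, if_neg h2, if_neg h2', one_mul, mul_zero, sub_zero,
        zero_mul, Real.sqrt_zero, hsq]
    · have h2' : tgt f = src e := h2.symm
      simp only [if_neg h1, if_pos h2, if_pos h2', zero_mul, mul_zero, sub_zero,
        mul_one, Real.sqrt_zero, sub_self]
    · have h2' : ¬ tgt f = src e := fun h => h2 h.symm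
      simp only [if_neg h1, if_neg h2, if_neg h2', zero_mul, mul_zero, sub_zero,
        Real.sqrt_zero, sub_self]
  · rfl
end
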